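/- arXiv:2004.07529 — 2 statements merged into one kernel-verified Lean document; each statement's English description precedes it below -/
import Mathlib

section
/- The group GL_2(ℚ) of invertible 2×2 rational matrices has infinitely many z-classes. -/
open scoped Matrix

/-- Two elements are z-equivalent if their centralizers are conjugate. -/
def zEquiv {G : Type*} [Group G] (g₁ g₂ : G) : Prop :=
  ∃ t : G, (Subgroup.centralizer {g₁}).map (MulAut.conj t).toMonoidHom =
    Subgroup.centralizer {g₂}

/-- The set of z-classes of a group. -/
def zClasses (G : Type*) [Group G] : Set (Set G) :=
  Set.range fun g => {h | zEquiv g h}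

lemma zEquiv_refl {G : Type*} [Group G] (g : G) : zEquiv g g := by
  refine ⟨1, ?_⟩
  have h1 : (MulAut.conj (1 : G)).toMonoidHom = MonoidHom.id G := by
    ext x; simp
  rw [h1, Subgroup.map_id]

-- key arithmetic lemma
lemma key_arith {p q : ℕ} (hp : p.Prime) (hq : q.Prime) (hpq : p ≠ q)
    (a c : ℚ) (h1 : a * a + q * c * c = p) (h2 : c * a + a * c = 0) : False := by
  haveI : Fact p.Prime := ⟨hp⟩
  have hc : a = 0 ∨ c = 0 := by
    have : (2 : ℚ) * (a * c) = 0 := by linarith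
    rcases mul_eq_zero.1 this with h | h
    · norm_num at h
    · exact mul_eq_zero.1 h
  have hval : ∀ x : ℚ, x ≠ 0 → padicValRat p (x * x) = 2 * padicValRat p x := by
    intro x hx
    rw [padicValRat.mul hx hx]; ring
  rcases hc with h | h
  · -- q * c * c = p
    subst h
    simp only [zero_mul, zero_add] at h1
    rw [mul_assoc] at h1
    have hc0 : c ≠ 0 := by
      rintro rfl
      simp at h1
      exact hp.ne_zero ((Nat.cast_eq_zero).1 h1.symm)
    have hq0 : (q : ℚ) ≠ 0 := Nat.cast_ne_zero.2 hq.ne_zero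
    have := congrArg (padicValRat p) h1
    rw [padicValRat.mul hq0 (mul_ne_zero hc0 hc0), hval c hc0,
      padicValRat.self hp.one_lt, padicValRat.of_nat,
      padicValNat.eq_zero_of_not_dvd (by
        rw [Nat.prime_dvd_prime_iff_eq hp hq]; exact hpq)] at this
    omega
  · subst h
    simp only [mul_zero, zero_mul, add_zero] at h1
    have ha0 : a ≠ 0 := by
      rintro rfl
      simp at h1
      exact hp.ne_zero ((Nat.cast_eq_zero).1 h1.symm)
    have := congrArg (padicValRat p) h1
    rw [hval a ha0, padicValRat.self hp.one_lt] at this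
    omega

def Amat (d : ℚ) : Matrix (Fin 2) (Fin 2) ℚ := !![0, d; 1, 0]

lemma Amat_mul_inv (d : ℚ) (hd : d ≠ 0) : Amat d * !![0, 1; d⁻¹, 0] = 1 := by
  ext i j
  fin_cases i <;> fin_cases j <;>
    simp [Amat, Matrix.mul_apply, Fin.sum_univ_two, mul_inv_cancel₀ hd]

lemma inv_mul_Amat (d : ℚ) (hd : d ≠ 0) : !![0, 1; d⁻¹, 0] * Amat d = 1 := by
  ext i j
  fin_cases i <;> fin_cases j <;>
    simp [Amat, Matrix.mul_apply, Fin.sum_univ_two, inv_mul_cancel₀ hd]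

def gU (d : ℚ) (hd : d ≠ 0) : GL (Fin 2) ℚ :=
  ⟨Amat d, !![0, 1; d⁻¹, 0], Amat_mul_inv d hd, inv_mul_Amat d hd⟩

lemma Amat_sq (d : ℚ) : Amat d * Amat d = d • 1 := by
  ext i j
  fin_cases i <;> fin_cases j <;>
    simp [Amat, Matrix.mul_apply, Fin.sum_univ_two, Matrix.one_apply]

lemma not_zEquiv {p q : ℕ} (hp : p.Prime) (hq : q.Prime) (hpq : p ≠ q) :
    ¬ zEquiv (gU p (by exact_mod_cast hp.ne_zero)) (gU q (by exact_mod_cast hq.ne_zero)) := by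
  set hp0 : (p : ℚ) ≠ 0 := by exact_mod_cast hp.ne_zero
  set hq0 : (q : ℚ) ≠ 0 := by exact_mod_cast hq.ne_zero
  rintro ⟨t, ht⟩
  -- the image of gU p lies in the centralizer of gU q
  have hmem : (MulAut.conj t) (gU p hp0) ∈ Subgroup.centralizer {gU q hq0} := by
    rw [← ht]
    exact Subgroup.mem_map_of_mem _ (Subgroup.mem_centralizer_iff.2 (by
      rintro g rfl; rfl))
  set x : GL (Fin 2) ℚ := (MulAut.conj t) (gU p hp0) with hx
  -- commutation at matrix level
  have hcomm : Amat q * (x : Matrix (Fin 2) (Fin 2) ℚ) =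
      (x : Matrix (Fin 2) (Fin 2) ℚ) * Amat q := by
    have := Subgroup.mem_centralizer_iff.1 hmem _ (Set.mem_singleton _)
    have := congrArg Units.val this
    simpa [Units.val_mul, gU] using this
  -- squaring at matrix level
  have hsq : (x : Matrix (Fin 2) (Fin 2) ℚ) * (x : Matrix (Fin 2) (Fin 2) ℚ)
      = (p : ℚ) • 1 := by
    have hxval : (x : Matrix (Fin 2) (Fin 2) ℚ) =
        (t : Matrix (Fin 2) (Fin 2) ℚ) * Amat p * ((t⁻¹ : GL (Fin 2) ℚ) : Matrix (Fin 2) (Fin 2) ℚ) := by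
      simp [hx, gU, MulAut.conj_apply, Units.val_mul, mul_assoc]
    have htinv : ((t⁻¹ : GL (Fin 2) ℚ) : Matrix (Fin 2) (Fin 2) ℚ) *
        (t : Matrix (Fin 2) (Fin 2) ℚ) = 1 := by
      rw [← Units.val_mul, inv_mul_cancel]; rfl
    have httinv : (t : Matrix (Fin 2) (Fin 2) ℚ) *
        ((t⁻¹ : GL (Fin 2) ℚ) : Matrix (Fin 2) (Fin 2) ℚ) = 1 := by
      rw [← Units.val_mul, mul_inv_cancel]; rfl
    calc (x : Matrix (Fin 2) (Fin 2) ℚ) * (x : Matrix (Fin 2) (Fin 2) ℚ)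
        = (t : Matrix (Fin 2) (Fin 2) ℚ) * (Amat p *
            ((((t⁻¹ : GL (Fin 2) ℚ) : Matrix (Fin 2) (Fin 2) ℚ) *
              (t : Matrix (Fin 2) (Fin 2) ℚ)) * Amat p)) *
            ((t⁻¹ : GL (Fin 2) ℚ) : Matrix (Fin 2) (Fin 2) ℚ) := by
          rw [hxval]; noncomm_ring
      _ = (p : ℚ) • 1 := by
          rw [htinv, one_mul, Amat_sq, Matrix.mul_smul, Matrix.smul_mul,
            Matrix.mul_one, httinv]
  set X : Matrix (Fin 2) (Fin 2) ℚ := (x : Matrix (Fin 2) (Fin 2) ℚ) with hX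
  set a : ℚ := X 0 0
  set c : ℚ := X 1 0
  have e1 : X 1 1 = a := by
    have h := congrFun (congrFun hcomm 0) 1
    simp [Amat, Matrix.mul_apply, Fin.sum_univ_two] at h
    have h2 : (q : ℚ) * X 1 1 = (q : ℚ) * a := by
      show (q : ℚ) * X 1 1 = (q : ℚ) * X 0 0
      rw [h]; ring
    exact mul_left_cancel₀ hq0 h2
  have e2 : X 0 1 = q * c := by
    have h := congrFun (congrFun hcomm 0) 0
    simp [Amat, Matrix.mul_apply, Fin.sum_univ_two] at h
    linarith
  have f1 : a * a + q * c * c = p := by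
    have := congrFun (congrFun hsq 0) 0
    simp [Matrix.mul_apply, Fin.sum_univ_two, Matrix.one_apply, e2] at this
    linarith
  have f2 : c * a + a * c = 0 := by
    have := congrFun (congrFun hsq 1) 0
    simp [Matrix.mul_apply, Fin.sum_univ_two, Matrix.one_apply, e1] at this
    linarith
  exact key_arith hp hq hpq a c f1 f2

/-- `GL₂(ℚ)` has infinitely many z-classes. -/
theorem infinite_zClasses_GL2_rat :
    (zClasses (GL (Fin 2) ℚ)).Infinite := by
  have hprime : ∀ n, (Nat.nth Nat.Prime n).Prime := Nat.prime_nth_prime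
  have hne : ∀ n, ((Nat.nth Nat.Prime n : ℕ) : ℚ) ≠ 0 := fun n => by
    exact_mod_cast (hprime n).ne_zero
  set g : ℕ → GL (Fin 2) ℚ := fun n => gU (Nat.nth Nat.Prime n) (hne n) with hg
  refine Set.infinite_of_injective_forall_mem
    (f := fun n : ℕ => {h | zEquiv (g n) h}) ?_ (fun n => ⟨g n, rfl⟩)
  intro m n hmn
  by_contra hne'
  have hpq : Nat.nth Nat.Prime m ≠ Nat.nth Nat.Prime n :=
    fun h => hne' (Nat.nth_injective Nat.infinite_setOf_prime h)
  simp only [] at hmn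
  have h1 : g n ∈ {h | zEquiv (g n) h} := zEquiv_refl (g n)
  rw [← hmn] at h1
  exact not_zEquiv (hprime m) (hprime n) hpq h1
end

section
/- Let n ≥ 3 and let D_{2n} be the dihedral group of order 2n. The number of z-classes of D_{2n} is 4 if n ≡ 0 (mod 4), and 3 otherwise (i.e., if n ≡ 1, 2, 3 mod 4). -/
/-!
Conjugating `g` by `t` conjugates its centralizer, so `g₁` and `g₂` are z-equivalent iff some
conjugate of `g₁` has the same centralizer as `g₂`, and the z-classes are counted by any function
`f` with `zEquiv g h ↔ f g = f h`.

In `D_{2n}` with `2 ≠ 0` in `ZMod n`, the centralizer of `r i` is everything if `2 i = 0` and the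
rotation subgroup otherwise; the centralizer of `sr i` is `{r j | 2 j = 0} ∪ {sr j | 2 j = 2 i}`,
which is determined by `2 i` and is never one of the former two. The conjugates of `sr i` are the
`sr (i + 2 m)`, so `sr i` and `sr j` are z-equivalent iff `2 j ∈ 2 i + 4 ZMod n`. If `4 ∤ n`, then
`4` divides `2` in `ZMod n` and all reflections are z-equivalent; if `4 ∣ n`, reducing mod `4`
shows that this happens iff `i` and `j` have the same parity. Hence 3, resp. 4, z-classes.
-/

open scoped Matrix

section zEquiv

variable {G : Type*} [Group G]

theorem Subgroup.map_conj_centralizer_singleton (t g : G) :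
    (Subgroup.centralizer {g}).map (MulAut.conj t).toMonoidHom =
      Subgroup.centralizer {t * g * t⁻¹} := by
  ext x
  rw [Subgroup.map_equiv_eq_comap_symm', Subgroup.mem_comap, Subgroup.mem_centralizer_singleton_iff,
    Subgroup.mem_centralizer_singleton_iff, ← (MulAut.conj t).injective.eq_iff]
  simp [mul_assoc]

theorem zEquiv_iff_exists_centralizer_conj_eq (g h : G) :
    zEquiv g h ↔ ∃ t : G, Subgroup.centralizer {t * g * t⁻¹} = Subgroup.centralizer {h} := by
  simp only [zEquiv, Subgroup.map_conj_centralizer_singleton]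

theorem card_zClasses_eq_card_range {α : Type*} (f : G → α)
    (hf : ∀ g h, zEquiv g h ↔ f g = f h) :
    Nat.card (zClasses G) = Nat.card (Set.range f) := by
  have hclasses : zClasses G = (fun a => f ⁻¹' {a}) '' Set.range f := by
    rw [zClasses, ← Set.range_comp]
    congr 1
    ext g h
    simp [hf, eq_comm]
  rw [hclasses, Nat.card_image_of_injOn]
  rintro _ ⟨g, rfl⟩ _ ⟨g', rfl⟩ hgg'
  exact (Set.ext_iff.1 hgg' g).1 rfl

end zEquiv

namespace ZMod

theorem exists_four_mul_eq_two {n : ℕ} (h4 : ¬ 4 ∣ n) : ∃ k : ZMod n, 4 * k = 2 := by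
  obtain ⟨k, c, hkc⟩ : ∃ k c : ℕ, 4 * k = 2 + c * n := by
    rcases Nat.even_or_odd n with ⟨m, rfl⟩ | ⟨m, rfl⟩
    · exact ⟨(m + 1) / 2, 1, by omega⟩
    · exact ⟨m + 1, 2, by ring⟩
  refine ⟨k, ?_⟩
  simpa using congrArg (Nat.cast : ℕ → ZMod n) hkc

theorem exists_two_mul_add_two_mul_eq_two_mul_iff {n : ℕ} [NeZero n] (i j : ZMod n) :
    (∃ m, 2 * (i + 2 * m) = 2 * j) ↔ (4 ∣ n → i.val % 2 = j.val % 2) := by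
  by_cases h4 : 4 ∣ n
  · simp only [h4, forall_const]
    constructor
    · rintro ⟨m, hm⟩
      have hm4 := congrArg (ZMod.castHom h4 (ZMod 4)) hm
      simp only [map_add, map_mul, map_ofNat, ZMod.castHom_apply, ZMod.cast_eq_val] at hm4
      have h : ((2 * i.val : ℕ) : ZMod 4) = ((2 * j.val : ℕ) : ZMod 4) := by
        push_cast
        have h40 : (4 : ZMod 4) = 0 := rfl
        linear_combination hm4 - (m.val : ZMod 4) * h40
      rw [ZMod.natCast_eq_natCast_iff'] at h
      omega
    · intro h
      obtain ⟨d, hd⟩ : ∃ d : ℤ, (j.val : ℤ) = i.val + 2 * d := ⟨(j.val - i.val : ℤ) / 2, by omega⟩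
      refine ⟨d, ?_⟩
      have hcast := congrArg (Int.cast : ℤ → ZMod n) hd
      push_cast [ZMod.natCast_zmod_val] at hcast
      linear_combination -2 * hcast
  · obtain ⟨k, hk⟩ := exists_four_mul_eq_two h4
    exact iff_of_true ⟨k * (j - i), by linear_combination (j - i) * hk⟩ (absurd · h4)

end ZMod

namespace DihedralGroup

variable {n : ℕ}

open Subgroup

@[simp]
theorem r_mem_centralizer_r (i j : ZMod n) : r j ∈ centralizer {r i} := by
  simp [mem_centralizer_singleton_iff, add_comm]

@[simp]
theorem sr_mem_centralizer_r_iff (i j : ZMod n) : sr j ∈ centralizer {r i} ↔ 2 * i = 0 := by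
  simp only [mem_centralizer_singleton_iff, sr_mul_r, r_mul_sr, sr.injEq]
  constructor <;> intro h <;> linear_combination h

@[simp]
theorem r_mem_centralizer_sr_iff (i j : ZMod n) : r j ∈ centralizer {sr i} ↔ 2 * j = 0 := by
  simp only [mem_centralizer_singleton_iff, sr_mul_r, r_mul_sr, sr.injEq]
  constructor <;> intro h <;> linear_combination -h

@[simp]
theorem sr_mem_centralizer_sr_iff (i j : ZMod n) :
    sr j ∈ centralizer {sr i} ↔ 2 * j = 2 * i := by
  simp only [mem_centralizer_singleton_iff, sr_mul_sr, r.injEq]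
  constructor <;> intro h <;> linear_combination -h

theorem centralizer_r_eq_centralizer_r_iff (i j : ZMod n) :
    centralizer {r i} = centralizer {r j} ↔ (2 * i = 0 ↔ 2 * j = 0) := by
  constructor
  · intro h
    simpa using congrArg (sr 0 ∈ ·) h
  · intro h
    ext (k | k) <;> simp [h]

theorem centralizer_sr_eq_centralizer_sr_iff (i j : ZMod n) :
    centralizer {sr i} = centralizer {sr j} ↔ 2 * i = 2 * j := by
  constructor
  · intro h
    simpa using congrArg (sr i ∈ ·) h
  · intro h
    ext (k | k) <;> simp [h]

theorem centralizer_r_ne_centralizer_sr (h2 : (2 : ZMod n) ≠ 0) (i j : ZMod n) :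
    centralizer {r i} ≠ centralizer {sr j} := by
  intro h
  have h1 := h ▸ r_mem_centralizer_r i 1
  exact h2 (by simpa using h1)

theorem centralizer_conj_r (t : DihedralGroup n) (i : ZMod n) :
    centralizer {t * r i * t⁻¹} = centralizer {r i} := by
  rcases t with k | k
  · simp [inv_r, r_mul_r]
  · simp only [inv_sr, sr_mul_r, sr_mul_sr, centralizer_r_eq_centralizer_r_iff]
    constructor <;> intro h <;> linear_combination -h

theorem exists_conj_sr_eq (t : DihedralGroup n) (i : ZMod n) :
    ∃ m, t * sr i * t⁻¹ = sr (i + 2 * m) := by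
  rcases t with k | k
  · exact ⟨-k, by simp only [inv_r, r_mul_sr, sr_mul_r, sr.injEq]; ring⟩
  · exact ⟨k - i, by simp only [inv_sr, sr_mul_sr, r_mul_sr, sr.injEq]; ring⟩

theorem zEquiv_r_iff (i : ZMod n) (g : DihedralGroup n) :
    zEquiv (r i) g ↔ centralizer {r i} = centralizer {g} := by
  simp only [zEquiv_iff_exists_centralizer_conj_eq, centralizer_conj_r, exists_const]

theorem zEquiv_sr_iff (i : ZMod n) (g : DihedralGroup n) :
    zEquiv (sr i) g ↔ ∃ m, centralizer {sr (i + 2 * m)} = centralizer {g} := by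
  rw [zEquiv_iff_exists_centralizer_conj_eq]
  constructor
  · rintro ⟨t, ht⟩
    obtain ⟨m, hm⟩ := exists_conj_sr_eq t i
    exact ⟨m, hm ▸ ht⟩
  · rintro ⟨m, hm⟩
    refine ⟨r (-m), ?_⟩
    rwa [inv_r, r_mul_sr, sr_mul_r, neg_neg, sub_neg_eq_add, add_assoc, ← two_mul]

def zClassIndex : DihedralGroup n → ℕ
  | r i => if 2 * i = 0 then 0 else 1
  | sr i => if 4 ∣ n then 2 + i.val % 2 else 2

theorem zEquiv_iff_zClassIndex_eq [NeZero n] (h2 : (2 : ZMod n) ≠ 0) (g h : DihedralGroup n) :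
    zEquiv g h ↔ zClassIndex g = zClassIndex h := by
  rcases g with i | i <;> rcases h with j | j
  · rw [zEquiv_r_iff, centralizer_r_eq_centralizer_r_iff]
    simp only [zClassIndex]
    split_ifs <;> simp_all
  · refine iff_of_false (by rw [zEquiv_r_iff]; exact centralizer_r_ne_centralizer_sr h2 _ _) ?_
    grind [zClassIndex]
  · refine iff_of_false ?_ (by grind [zClassIndex])
    rw [zEquiv_sr_iff]
    exact fun ⟨m, hm⟩ => centralizer_r_ne_centralizer_sr h2 _ _ hm.symm
  · rw [zEquiv_sr_iff]
    simp only [centralizer_sr_eq_centralizer_sr_iff, ZMod.exists_two_mul_add_two_mul_eq_two_mul_iff,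
      zClassIndex]
    split_ifs with h4 <;> simp [h4]

theorem range_zClassIndex (h2 : (2 : ZMod n) ≠ 0) :
    Set.range (zClassIndex (n := n)) = Set.Iio (if 4 ∣ n then 4 else 3) := by
  ext v
  simp only [Set.mem_range, Set.mem_Iio]
  constructor
  · rintro ⟨i | i, rfl⟩ <;> simp only [zClassIndex] <;> split_ifs <;> omega
  · intro hv
    have hr0 : zClassIndex (r 0 : DihedralGroup n) = 0 := by simp [zClassIndex]
    have hr1 : zClassIndex (r 1 : DihedralGroup n) = 1 := by simp [zClassIndex, h2]
    split_ifs at hv with h4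
    · have hsr0 : zClassIndex (sr 0 : DihedralGroup n) = 2 := by simp [zClassIndex, h4]
      have hsr1 : zClassIndex (sr 1 : DihedralGroup n) = 3 := by
        simp [zClassIndex, h4, ZMod.val_one'' (by omega : n ≠ 1)]
      interval_cases v <;> exact ⟨_, ‹_›⟩
    · have hsr0 : zClassIndex (sr 0 : DihedralGroup n) = 2 := by simp [zClassIndex, h4]
      interval_cases v <;> exact ⟨_, ‹_›⟩

end DihedralGroup

/-- for `n ≥ 3`, the dihedral group of order `2n` has 4 z-classes if
`4 ∣ n`, and 3 z-classes otherwise. -/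
theorem card_zClasses_dihedral (n : ℕ) (hn : 3 ≤ n) :
    Nat.card (zClasses (DihedralGroup n)) = if n % 4 = 0 then 4 else 3 := by
  have : NeZero n := ⟨by omega⟩
  have h2 : (2 : ZMod n) ≠ 0 := by
    rw [← Nat.cast_ofNat, Ne, ZMod.natCast_eq_zero_iff]
    exact fun h => absurd (Nat.le_of_dvd two_pos h) (by omega)
  rw [card_zClasses_eq_card_range _ (DihedralGroup.zEquiv_iff_zClassIndex_eq h2),
    DihedralGroup.range_zClassIndex h2, Nat.card_coe_set_eq, Set.ncard_Iio_nat]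
  simp only [Nat.dvd_iff_mod_eq_zero]
end
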